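/- arXiv:0803.2496 — 6 statements merged into one kernel-verified Lean document; each statement's English description precedes it below -/
import Mathlib

section
/- Let l > 0, 0 < a < l, m > 0 and z be real numbers, and suppose r₊ > 0 satisfies Δ_r(r₊) = 0. Then for every r ≥ r₊ and every θ ∈ [0, π], one has (a · sin θ · √(Δ_r(r))) / ((r² + a²) · √(Δ_θ(θ))) ≤ (a/l) · √((r₊² + l²)/(r₊² + a²)), and moreover (a/l) · √((r₊² + l²)/(r₊² + a²)) < 1. In particular the function α(r,θ) = a sin θ √(Δ_r(r)) / ((r² + a²) √(Δ_θ(θ))) is bounded on (r₊, ∞) × (0, π) by a constant strictly smaller than 1. -/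
/-!
At the horizon, `Δ_r(r₊) = 0` says `2 m r₊ - z² = (r₊² + a²)(1 + r₊²/l²) ≥ 0`, hence
`2 m r - z² ≥ 0` for `r ≥ r₊`. With `C = (r₊² + l²)/(r₊² + a²)` the gap
`C (r² + a²)²/l² - Δ_r(r)` is then `(l² - a²)(r² - r₊²)(r² + a²)/((r₊² + a²) l²) + (2 m r - z²)`,
which is nonnegative. On the angular side `sin θ ≤ √(1 - cos² θ) ≤ √Δ_θ(θ)` since `a² ≤ l²`.
Multiplying the two square-root bounds gives `α ≤ (a/l)√C`, and `(a/l)²C < 1` reduces to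
`a² r₊² < l² r₊²`.
-/

open Real

namespace KerrAdS

noncomputable def deltaR (l a m z r : ℝ) : ℝ :=
  (r ^ 2 + a ^ 2) * (1 + r ^ 2 / l ^ 2) - 2 * m * r + z ^ 2

noncomputable def deltaTheta (l a θ : ℝ) : ℝ := 1 - a ^ 2 / l ^ 2 * cos θ ^ 2

variable {l a : ℝ}

lemma deltaTheta_pos (hal : a ^ 2 < l ^ 2) (θ : ℝ) : 0 < deltaTheta l a θ := by
  have hk : a ^ 2 / l ^ 2 < 1 := (div_lt_one (by nlinarith [sq_nonneg a])).2 hal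
  unfold deltaTheta
  nlinarith [cos_sq_le_one θ, sq_nonneg (cos θ), div_nonneg (sq_nonneg a) (sq_nonneg l)]

lemma sin_le_sqrt_deltaTheta (hal : a ^ 2 ≤ l ^ 2) (θ : ℝ) : sin θ ≤ √(deltaTheta l a θ) := by
  have hk : a ^ 2 / l ^ 2 ≤ 1 := div_le_one_of_le₀ hal (sq_nonneg l)
  calc sin θ ≤ |sin θ| := le_abs_self _
    _ = √(1 - cos θ ^ 2) := by rw [← sin_sq, sqrt_sq_eq_abs]
    _ ≤ √(deltaTheta l a θ) := by
      unfold deltaTheta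
      gcongr
      nlinarith [sq_nonneg (cos θ)]

variable {m z rp r : ℝ}

lemma deltaR_le_of_deltaR_eq_zero (hl : l ≠ 0) (hal : a ^ 2 ≤ l ^ 2) (hm : 0 ≤ m) (hrp : 0 < rp)
    (hr : rp ≤ r) (hΔ : deltaR l a m z rp = 0) :
    deltaR l a m z r ≤ (rp ^ 2 + l ^ 2) / (rp ^ 2 + a ^ 2) * ((r ^ 2 + a ^ 2) / l) ^ 2 := by
  have hmass : 0 ≤ 2 * m * r - z ^ 2 := by
    have : 2 * m * rp - z ^ 2 = (rp ^ 2 + a ^ 2) * (1 + rp ^ 2 / l ^ 2) := by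
      unfold deltaR at hΔ; linarith
    have : 0 ≤ (rp ^ 2 + a ^ 2) * (1 + rp ^ 2 / l ^ 2) := by positivity
    linarith [mul_le_mul_of_nonneg_left hr hm]
  have hgap : (rp ^ 2 + l ^ 2) / (rp ^ 2 + a ^ 2) * ((r ^ 2 + a ^ 2) / l) ^ 2 - deltaR l a m z r
      = (l ^ 2 - a ^ 2) * (r ^ 2 - rp ^ 2) * (r ^ 2 + a ^ 2) / ((rp ^ 2 + a ^ 2) * l ^ 2)
        + (2 * m * r - z ^ 2) := by
    unfold deltaR
    field_simp
    ring
  have : 0 ≤ (l ^ 2 - a ^ 2) * (r ^ 2 - rp ^ 2) * (r ^ 2 + a ^ 2) / ((rp ^ 2 + a ^ 2) * l ^ 2) := by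
    have : 0 ≤ r ^ 2 - rp ^ 2 := by nlinarith
    have : 0 ≤ l ^ 2 - a ^ 2 := by linarith
    positivity
  linarith

lemma div_mul_sqrt_lt_one (ha : 0 < a) (hal : a < l) (hrp : rp ≠ 0) :
    a / l * √((rp ^ 2 + l ^ 2) / (rp ^ 2 + a ^ 2)) < 1 := by
  have hl : 0 < l := ha.trans hal
  rw [← lt_div_iff₀' (by positivity), one_div_div, sqrt_lt' (by positivity),
    div_lt_iff₀ (by positivity), div_pow, div_mul_eq_mul_div, lt_div_iff₀ (by positivity)]
  have : a ^ 2 < l ^ 2 := by gcongr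
  have : 0 < rp ^ 2 := by positivity
  nlinarith

end KerrAdS

open KerrAdS in
theorem stmt0 (l a m z rp : ℝ) (hl : 0 < l) (ha : 0 < a) (hal : a < l) (hm : 0 < m)
    (hrp : 0 < rp)
    (hΔ : (rp ^ 2 + a ^ 2) * (1 + rp ^ 2 / l ^ 2) - 2 * m * rp + z ^ 2 = 0) :
    (∀ r, rp ≤ r → ∀ θ ∈ Set.Icc (0 : ℝ) π,
        a * Real.sin θ *
            Real.sqrt ((r ^ 2 + a ^ 2) * (1 + r ^ 2 / l ^ 2) - 2 * m * r + z ^ 2) /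
          ((r ^ 2 + a ^ 2) * Real.sqrt (1 - a ^ 2 / l ^ 2 * Real.cos θ ^ 2)) ≤
        a / l * Real.sqrt ((rp ^ 2 + l ^ 2) / (rp ^ 2 + a ^ 2))) ∧
      a / l * Real.sqrt ((rp ^ 2 + l ^ 2) / (rp ^ 2 + a ^ 2)) < 1 := by
  have hal2 : a ^ 2 < l ^ 2 := by gcongr
  refine ⟨fun r hr θ _ => ?_, div_mul_sqrt_lt_one ha hal hrp.ne'⟩
  set C := (rp ^ 2 + l ^ 2) / (rp ^ 2 + a ^ 2)
  have hsqrtΔr : √(deltaR l a m z r) ≤ √C * ((r ^ 2 + a ^ 2) / l) := by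
    rw [sqrt_le_iff]
    refine ⟨by positivity, ?_⟩
    rw [mul_pow, sq_sqrt (by positivity)]
    exact deltaR_le_of_deltaR_eq_zero hl.ne' hal2.le hm.le hrp hr hΔ
  have hT : 0 < √(deltaTheta l a θ) := sqrt_pos.2 (deltaTheta_pos hal2 θ)
  rw [div_le_iff₀ (by positivity)]
  calc a * sin θ * √(deltaR l a m z r)
      ≤ a * √(deltaTheta l a θ) * (√C * ((r ^ 2 + a ^ 2) / l)) := by
        gcongr
        exact sin_le_sqrt_deltaTheta hal2.le θ
    _ = _ := by unfold deltaTheta; field_simp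
end

section
/- Let H be a complex Hilbert space, let Ω be a bounded selfadjoint positive operator on H which is bijective with bounded inverse Ω⁻¹, and let T be a densely defined symmetric operator in H with domain D. Define the operator S with domain Ω(D) := { Ω x : x ∈ D } by S(Ω x) = Ω⁻¹(T x) (i.e. S = Ω⁻¹ ∘ T ∘ Ω⁻¹). Then S is densely defined and symmetric, its adjoint is S* = Ω⁻¹ ∘ T* ∘ Ω⁻¹ with domain Ω(dom T*), and S is essentially selfadjoint if and only if T is essentially selfadjoint. -/
open scoped InnerProductSpace

/-- The composition `S ∘ B` of a partially defined operator `S` with an everywhere-defined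
linear map `B`, with domain `{x | B x ∈ dom S}`. -/
noncomputable def pmapCompLM {𝕜 H₁ H₂ H₃ : Type*} [RCLike 𝕜]
    [NormedAddCommGroup H₁] [InnerProductSpace 𝕜 H₁]
    [NormedAddCommGroup H₂] [InnerProductSpace 𝕜 H₂]
    [NormedAddCommGroup H₃] [InnerProductSpace 𝕜 H₃]
    (S : H₂ →ₗ.[𝕜] H₃) (B : H₁ →ₗ[𝕜] H₂) : H₁ →ₗ.[𝕜] H₃ where
  domain := S.domain.comap B
  toFun := S.toFun.comp (B.restrict fun _ hx => hx)

/-- The operator `Ω⁻¹ ∘ T ∘ Ω⁻¹` for a continuous linear equivalence `Ω` and a partially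
defined operator `T`; its domain is `{x | Ω⁻¹ x ∈ dom T} = Ω (dom T)`. -/
noncomputable def conjOp {H : Type*} [NormedAddCommGroup H] [InnerProductSpace ℂ H]
    (Ω : H ≃L[ℂ] H) (T : H →ₗ.[ℂ] H) : H →ₗ.[ℂ] H :=
  (((Ω.symm : H →L[ℂ] H)) : H →ₗ[ℂ] H).compPMap
    (pmapCompLM T (((Ω.symm : H →L[ℂ] H)) : H →ₗ[ℂ] H))

/-!
Conjugation by a symmetric `Ω⁻¹` preserves formal adjointness:
`⟪Ω⁻¹ T Ω⁻¹ x, y⟫ = ⟪x, Ω⁻¹ T' Ω⁻¹ y⟫` whenever `T'` is a formal adjoint of `T`. Since the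
adjoint is the largest formal adjoint, this gives `Ω⁻¹ T* Ω⁻¹ ≤ S*`; the same inclusion for the
conjugation by `Ω`, which undoes `S ↦ Ω⁻¹ S Ω⁻¹`, gives the reverse one. Hence
`S* = Ω⁻¹ T* Ω⁻¹`, applying this twice `S** = Ω⁻¹ T** Ω⁻¹`, and essential selfadjointness
transfers because conjugation is injective.
-/

open LinearPMap

theorem LinearMap.IsSymmetric.continuousLinearEquiv_symm {𝕜 E : Type*} [RCLike 𝕜]
    [NormedAddCommGroup E] [InnerProductSpace 𝕜 E] {Ω : E ≃L[𝕜] E}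
    (hΩ : ((Ω : E →L[𝕜] E) : E →ₗ[𝕜] E).IsSymmetric) :
    ((Ω.symm : E →L[𝕜] E) : E →ₗ[𝕜] E).IsSymmetric := fun x y => by
  simpa using (hΩ (Ω.symm x) (Ω.symm y)).symm

section ConjOp

variable {H : Type*} [NormedAddCommGroup H] [InnerProductSpace ℂ H]

theorem mem_conjOp_domain {Ω : H ≃L[ℂ] H} {T : H →ₗ.[ℂ] H} {x : H} :
    x ∈ (conjOp Ω T).domain ↔ Ω.symm x ∈ T.domain := Iff.rfl

theorem conjOp_apply (Ω : H ≃L[ℂ] H) (T : H →ₗ.[ℂ] H) (x : (conjOp Ω T).domain) :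
    conjOp Ω T x = Ω.symm (T ⟨Ω.symm x, x.2⟩) := rfl

theorem conjOp_domain_eq_map (Ω : H ≃L[ℂ] H) (T : H →ₗ.[ℂ] H) :
    (conjOp Ω T).domain = T.domain.map ((Ω : H →L[ℂ] H) : H →ₗ[ℂ] H) := by
  ext x
  simp only [mem_conjOp_domain, Submodule.mem_map]
  constructor
  · intro h
    exact ⟨Ω.symm x, h, by simp⟩
  · rintro ⟨y, hy, rfl⟩
    simpa using hy

theorem dense_conjOp_domain {Ω : H ≃L[ℂ] H} {T : H →ₗ.[ℂ] H} (hT : Dense (T.domain : Set H)) :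
    Dense ((conjOp Ω T).domain : Set H) := by
  rw [conjOp_domain_eq_map]
  exact Ω.surjective.denseRange.dense_image Ω.continuous hT

theorem conjOp_mono (Ω : H ≃L[ℂ] H) {S T : H →ₗ.[ℂ] H} (h : S ≤ T) : conjOp Ω S ≤ conjOp Ω T :=
  ⟨fun _ hx => h.1 hx, fun x y hxy => by
    rw [conjOp_apply, conjOp_apply]
    exact congrArg Ω.symm (h.2 (congrArg Ω.symm hxy))⟩

theorem conjOp_symm_conjOp (Ω : H ≃L[ℂ] H) (T : H →ₗ.[ℂ] H) :
    conjOp Ω.symm (conjOp Ω T) = T := by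
  refine LinearPMap.ext (by ext x; simp [mem_conjOp_domain]) fun x _ _ => ?_
  simp [conjOp_apply]

theorem conjOp_conjOp_symm (Ω : H ≃L[ℂ] H) (T : H →ₗ.[ℂ] H) : conjOp Ω (conjOp Ω.symm T) = T :=
  conjOp_symm_conjOp Ω.symm T

theorem conjOp_injective (Ω : H ≃L[ℂ] H) : Function.Injective (conjOp Ω) :=
  Function.LeftInverse.injective (g := conjOp Ω.symm) (conjOp_symm_conjOp Ω)

theorem LinearPMap.IsFormalAdjoint.conjOp {Ω : H ≃L[ℂ] H}
    (hΩ : ((Ω : H →L[ℂ] H) : H →ₗ[ℂ] H).IsSymmetric) {T T' : H →ₗ.[ℂ] H}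
    (h : T.IsFormalAdjoint T') :
    (conjOp Ω T).IsFormalAdjoint (conjOp Ω T') := fun x y => by
  have hΩ' : ∀ u v : H, ⟪Ω.symm u, v⟫_ℂ = ⟪u, Ω.symm v⟫_ℂ := hΩ.continuousLinearEquiv_symm
  rw [conjOp_apply, conjOp_apply, hΩ', h ⟨Ω.symm x, x.2⟩ ⟨Ω.symm y, y.2⟩, ← hΩ']

variable [CompleteSpace H]

theorem conjOp_adjoint_le_adjoint_conjOp {Ω : H ≃L[ℂ] H}
    (hΩ : ((Ω : H →L[ℂ] H) : H →ₗ[ℂ] H).IsSymmetric) {T : H →ₗ.[ℂ] H}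
    (hT : Dense (T.domain : Set H)) : conjOp Ω T† ≤ (conjOp Ω T)† :=
  ((adjoint_isFormalAdjoint hT).conjOp hΩ).symm.le_adjoint (dense_conjOp_domain hT)

theorem adjoint_conjOp {Ω : H ≃L[ℂ] H} (hΩ : ((Ω : H →L[ℂ] H) : H →ₗ[ℂ] H).IsSymmetric)
    {T : H →ₗ.[ℂ] H} (hT : Dense (T.domain : Set H)) : (conjOp Ω T)† = conjOp Ω T† := by
  refine le_antisymm ?_ (conjOp_adjoint_le_adjoint_conjOp hΩ hT)
  have h := conjOp_adjoint_le_adjoint_conjOp hΩ.continuousLinearEquiv_symm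
    (dense_conjOp_domain (Ω := Ω) hT)
  rw [conjOp_symm_conjOp] at h
  simpa only [conjOp_conjOp_symm] using conjOp_mono Ω h

end ConjOp

theorem stmt4 {H : Type*} [NormedAddCommGroup H] [InnerProductSpace ℂ H] [CompleteSpace H]
    (Ω : H ≃L[ℂ] H) (hΩ : ((Ω : H →L[ℂ] H)).IsPositive)
    (T : H →ₗ.[ℂ] H) (hT : Dense (T.domain : Set H))
    (hsym : ∀ x y : T.domain, ⟪T x, (y : H)⟫_ℂ = ⟪(x : H), T y⟫_ℂ) :
    (conjOp Ω T).domain = T.domain.map ((Ω : H →L[ℂ] H) : H →ₗ[ℂ] H) ∧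
      Dense ((conjOp Ω T).domain : Set H) ∧
      (∀ x y : (conjOp Ω T).domain,
        ⟪conjOp Ω T x, (y : H)⟫_ℂ = ⟪(x : H), conjOp Ω T y⟫_ℂ) ∧
      (conjOp Ω T).adjoint = conjOp Ω T.adjoint ∧
      ((conjOp Ω T).adjoint.adjoint = (conjOp Ω T).adjoint ↔
        T.adjoint.adjoint = T.adjoint) := by
  have hΩ' := hΩ.isSymmetric
  have hadj := adjoint_conjOp hΩ' hT
  have hT' : Dense (T†.domain : Set H) := hT.mono (IsFormalAdjoint.le_adjoint hT hsym).1
  refine ⟨conjOp_domain_eq_map Ω T, dense_conjOp_domain hT, IsFormalAdjoint.conjOp hΩ' hsym,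
    hadj, ?_⟩
  rw [hadj, adjoint_conjOp hΩ' hT', (conjOp_injective Ω).eq_iff]
end

section
/- Let x₀ < b be real numbers, let f : ℝ → ℝ be continuous on [x₀, b) and have a derivative f′(x) at every x ∈ [x₀, b), and let c ∈ ℝ. Assume f(x₀) ≤ c and that for every x ∈ [x₀, b) with f(x) = c one has f′(x) < 0. Then f(x) ≤ c for all x ∈ [x₀, b). -/
theorem stmt9_general (x₀ b c : ℝ) (f f' : ℝ → ℝ)
    (hderiv : ∀ x ∈ Set.Ico x₀ b, HasDerivAt f (f' x) x)
    (hstart : f x₀ ≤ c)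
    (hbar : ∀ x ∈ Set.Ico x₀ b, f x = c → f' x < 0) :
    ∀ x ∈ Set.Ico x₀ b, f x ≤ c := by
  intro x hx
  have hsub : Set.Icc x₀ x ⊆ Set.Ico x₀ b := Set.Icc_subset_Ico_right hx.2
  refine image_le_of_deriv_right_lt_deriv_boundary (B := fun _ => c) (B' := fun _ => 0)
    (fun y hy => (hderiv y (hsub hy)).continuousAt.continuousWithinAt)
    (fun y hy => (hderiv y (hsub (Set.Ico_subset_Icc_self hy))).hasDerivWithinAt)
    hstart (fun _ => hasDerivAt_const _ c)
    (fun y hy => hbar y (hsub (Set.Ico_subset_Icc_self hy))) ⟨hx.1, le_rfl⟩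

theorem stmt9 (x₀ b c : ℝ) (hx₀b : x₀ < b) (f f' : ℝ → ℝ)
    (hcont : ContinuousOn f (Set.Ico x₀ b))
    (hderiv : ∀ x ∈ Set.Ico x₀ b, HasDerivAt f (f' x) x)
    (hstart : f x₀ ≤ c)
    (hbar : ∀ x ∈ Set.Ico x₀ b, f x = c → f' x < 0) :
    ∀ x ∈ Set.Ico x₀ b, f x ≤ c :=
  stmt9_general x₀ b c f f' hderiv hstart hbar
end

section
/- Let x₀ < b be real numbers and let f : ℝ → ℝ have a derivative f′(x) at every x ∈ [x₀, b). Assume that for every x ∈ [x₀, b): if f(x)/π ∈ ℤ then f′(x) < 0, and if f(x)/π − 1/2 ∈ ℤ then f′(x) > 0. Then f is bounded on [x₀, b): there exists M such that |f(x)| ≤ M for all x ∈ [x₀, b). -/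
/-!
Pick levels `π p ≥ f x₀` and `π (q + 1/2) ≤ f x₀`. At a first time where `f` reached the upper
level it would have to be nondecreasing there, contradicting `f' < 0` at multiples of `π`; dually
for the lower level. Hence `f` stays between the two levels on all of `[x₀, b)`.
-/

open Real Set

lemma image_le_of_hasDerivAt_neg_at_level {f f' : ℝ → ℝ} {a b c : ℝ}
    (hf : ∀ x ∈ Ico a b, HasDerivAt f (f' x) x) (ha : f a ≤ c)
    (hc : ∀ x ∈ Ico a b, f x = c → f' x < 0) :
    ∀ x ∈ Ico a b, f x ≤ c := by
  intro x hx
  have hsub : Icc a x ⊆ Ico a b := Icc_subset_Ico_right hx.2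
  refine image_le_of_deriv_right_lt_deriv_boundary' (B := fun _ ↦ c) (B' := 0)
    (fun y hy ↦ (hf y (hsub hy)).continuousAt.continuousWithinAt)
    (fun y hy ↦ (hf y (hsub (Ico_subset_Icc_self hy))).hasDerivWithinAt) ha continuousOn_const
    (fun _ _ ↦ hasDerivWithinAt_const _ _ _)
    (fun y hy ↦ hc y (hsub (Ico_subset_Icc_self hy))) (right_mem_Icc.2 hx.1)

lemma le_image_of_hasDerivAt_pos_at_level {f f' : ℝ → ℝ} {a b c : ℝ}
    (hf : ∀ x ∈ Ico a b, HasDerivAt f (f' x) x) (ha : c ≤ f a)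
    (hc : ∀ x ∈ Ico a b, f x = c → 0 < f' x) :
    ∀ x ∈ Ico a b, c ≤ f x := by
  intro x hx
  have := image_le_of_hasDerivAt_neg_at_level (f := -f) (f' := -f') (c := -c)
    (fun y hy ↦ (hf y hy).neg) (neg_le_neg ha)
    (fun y hy hfy ↦ neg_neg_of_pos (hc y hy (neg_inj.1 hfy))) x hx
  exact neg_le_neg_iff.1 this

lemma exists_int_le_pi_mul (y : ℝ) : ∃ p : ℤ, y ≤ π * p :=
  ⟨⌈y / π⌉, (div_le_iff₀' pi_pos).1 (Int.le_ceil _)⟩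

lemma exists_int_pi_mul_add_half_le (y : ℝ) : ∃ q : ℤ, π * (q + 1 / 2) ≤ y :=
  ⟨⌊y / π - 1 / 2⌋, (le_div_iff₀' pi_pos).1 (by linarith [Int.floor_le (y / π - 1 / 2)])⟩

theorem stmt10_general (x₀ b : ℝ) (f f' : ℝ → ℝ)
    (hderiv : ∀ x ∈ Set.Ico x₀ b, HasDerivAt f (f' x) x)
    (hdown : ∀ x ∈ Set.Ico x₀ b, (∃ p : ℤ, f x / π = p) → f' x < 0)
    (hup : ∀ x ∈ Set.Ico x₀ b, (∃ p : ℤ, f x / π - 1 / 2 = p) → 0 < f' x) :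
    ∃ M : ℝ, ∀ x ∈ Set.Ico x₀ b, |f x| ≤ M := by
  obtain ⟨p, hp⟩ := exists_int_le_pi_mul (f x₀)
  obtain ⟨q, hq⟩ := exists_int_pi_mul_add_half_le (f x₀)
  have upper := image_le_of_hasDerivAt_neg_at_level hderiv hp fun x hx hfx ↦
    hdown x hx ⟨p, by rw [hfx, mul_div_cancel_left₀ _ pi_ne_zero]⟩
  have lower := le_image_of_hasDerivAt_pos_at_level hderiv hq fun x hx hfx ↦
    hup x hx ⟨q, by rw [hfx, mul_div_cancel_left₀ _ pi_ne_zero, add_sub_cancel_right]⟩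
  exact ⟨_, fun x hx ↦ abs_le_max_abs_abs (lower x hx) (upper x hx)⟩

theorem stmt10 (x₀ b : ℝ) (hx₀b : x₀ < b) (f f' : ℝ → ℝ)
    (hderiv : ∀ x ∈ Set.Ico x₀ b, HasDerivAt f (f' x) x)
    (hdown : ∀ x ∈ Set.Ico x₀ b, (∃ p : ℤ, f x / π = p) → f' x < 0)
    (hup : ∀ x ∈ Set.Ico x₀ b, (∃ p : ℤ, f x / π - 1 / 2 = p) → 0 < f' x) :
    ∃ M : ℝ, ∀ x ∈ Set.Ico x₀ b, |f x| ≤ M :=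
  stmt10_general x₀ b f f' hderiv hdown hup
end

section
/- Fix real parameters l > 0, 0 ≤ a < l, m, z, and set Δ_r(r) = (r² + a²)(1 + r²/l²) − 2 m r + z² and Ξ = 1 − a²/l². Suppose r₊ > 0 satisfies Δ_r(r₊) = 0, the derivative Δ_r′(r₊) > 0 (non-extremal case), and Δ_r(r) > 0 for all r ∈ (r₊, r₀], where r₀ > r₊. Let k, e, q_e, μ, λ be real numbers and set φ₊ = (a Ξ k + e q_e r₊)/(r₊² + a²). Then the function r ↦ ((r² + a²)/Δ_r(r)) · |(a Ξ k + e q_e r)/(r² + a²) − φ₊| + (μ |r| + |λ|)/√(Δ_r(r)) is Lebesgue-integrable on the interval (r₊, r₀). -/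
/-!
At a simple zero `r₊` the slope `s = dslope Δ_r r₊` is continuous on `[r₊, r₀]` with
`s(r₊) = Δ_r′(r₊) > 0` and `s(r) = Δ_r(r)/(r - r₊) > 0` for `r > r₊`, so `Δ_r(r) ≥ c (r - r₊)` for
some `c > 0`. The potential `(aΞk + e q_e r)/(r² + a²)` is Lipschitz on `[r₊, r₀]`, so the first
term is bounded; the second is `O((r - r₊)^(-1/2))`, which is integrable.
-/

open MeasureTheory Set NNReal

theorem exists_pos_mul_sub_le_of_deriv_pos {f : ℝ → ℝ} {a b : ℝ} (hab : a ≤ b)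
    (hf : ContinuousOn f (Icc a b)) (hfa : f a = 0) (hf' : 0 < deriv f a)
    (hpos : ∀ x ∈ Ioc a b, 0 < f x) :
    ∃ c > 0, ∀ x ∈ Icc a b, c * (x - a) ≤ f x := by
  have hslope_cont : ContinuousOn (dslope f a) (Icc a b) := by
    intro x hx
    rcases eq_or_ne x a with rfl | hxa
    · exact (continuousAt_dslope_same.2
        (differentiableAt_of_deriv_ne_zero hf'.ne')).continuousWithinAt
    · exact (continuousWithinAt_dslope_of_ne hxa).2 (hf x hx)
  have hslope_pos : ∀ x ∈ Icc a b, 0 < dslope f a x := by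
    intro x hx
    rcases eq_or_lt_of_le hx.1 with rfl | hax
    · rwa [dslope_same]
    · rw [dslope_of_ne _ hax.ne', slope_def_field, hfa, sub_zero]
      exact div_pos (hpos x ⟨hax, hx.2⟩) (sub_pos.2 hax)
  obtain ⟨x₀, hx₀, hmin⟩ := isCompact_Icc.exists_isMinOn (nonempty_Icc.2 hab) hslope_cont
  refine ⟨dslope f a x₀, hslope_pos x₀ hx₀, fun x hx => ?_⟩
  calc dslope f a x₀ * (x - a) ≤ dslope f a x * (x - a) :=
        mul_le_mul_of_nonneg_right (hmin hx) (sub_nonneg.2 hx.1)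
    _ = f x := by simpa [hfa, mul_comm] using sub_smul_dslope f a x

theorem integrableOn_Ioo_sub_rpow {a b s : ℝ} (hs : -1 < s) :
    IntegrableOn (fun x => (x - a) ^ s) (Ioo a b) := by
  have h := (intervalIntegral.intervalIntegrable_rpow' (a := 0) (b := b - a) hs).comp_sub_right a
  rw [zero_add, sub_add_cancel] at h
  exact h.def'.mono_set (Ioo_subset_Ioc_self.trans Ioc_subset_uIoc)

section SimpleZero

variable {f : ℝ → ℝ} {a b c : ℝ}

theorem integrableOn_div_mul_abs_sub_of_lipschitzOnWith {w φ : ℝ → ℝ} {K : ℝ≥0} (hc : 0 < c)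
    (hf : ContinuousOn f (Ioo a b)) (hfc : ∀ x ∈ Ioo a b, c * (x - a) ≤ f x)
    (hw : ContinuousOn w (Icc a b)) (hφ : LipschitzOnWith K φ (Icc a b)) :
    IntegrableOn (fun x => w x / f x * |φ x - φ a|) (Ioo a b) := by
  have hf_pos : ∀ x ∈ Ioo a b, 0 < f x := fun x hx =>
    (mul_pos hc (sub_pos.2 hx.1)).trans_le (hfc x hx)
  obtain ⟨C, hC⟩ := isCompact_Icc.exists_bound_of_continuousOn hw
  refine (integrableOn_const (C := C * K / c) measure_Ioo_lt_top.ne).mono' ?_ ?_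
  · refine ContinuousOn.aestronglyMeasurable ?_ measurableSet_Ioo
    refine ((hw.mono Ioo_subset_Icc_self).div hf fun x hx => (hf_pos x hx).ne').mul ?_
    exact ((hφ.continuousOn.mono Ioo_subset_Icc_self).sub continuousOn_const).abs
  · filter_upwards [ae_restrict_mem measurableSet_Ioo] with x hx
    have hxa : 0 < x - a := sub_pos.2 hx.1
    have hx' : x ∈ Icc a b := Ioo_subset_Icc_self hx
    have hφx : |φ x - φ a| ≤ K * (x - a) := by
      simpa [Real.dist_eq, abs_of_pos hxa] using
        hφ.dist_le_mul x hx' a (left_mem_Icc.2 (hx.1.trans hx.2).le)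
    rw [norm_mul, norm_div, Real.norm_of_nonneg (hf_pos x hx).le, Real.norm_eq_abs |_|, abs_abs,
      div_mul_eq_mul_div, div_le_div_iff₀ (hf_pos x hx) hc]
    calc ‖w x‖ * |φ x - φ a| * c ≤ C * (K * (x - a)) * c := by
          gcongr
          · exact (norm_nonneg _).trans (hC x hx')
          · exact hC x hx'
      _ = C * K * (c * (x - a)) := by ring
      _ ≤ C * K * f x := by
          gcongr
          · exact mul_nonneg ((norm_nonneg _).trans (hC x hx')) K.2
          · exact hfc x hx

theorem integrableOn_div_sqrt_of_mul_sub_le {v : ℝ → ℝ} (hc : 0 < c)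
    (hf : ContinuousOn f (Ioo a b)) (hfc : ∀ x ∈ Ioo a b, c * (x - a) ≤ f x)
    (hv : ContinuousOn v (Icc a b)) :
    IntegrableOn (fun x => v x / √(f x)) (Ioo a b) := by
  have hf_pos : ∀ x ∈ Ioo a b, 0 < f x := fun x hx =>
    (mul_pos hc (sub_pos.2 hx.1)).trans_le (hfc x hx)
  obtain ⟨C, hC⟩ := isCompact_Icc.exists_bound_of_continuousOn hv
  refine ((integrableOn_Ioo_sub_rpow (a := a) (b := b) (s := -(1 / 2)) (by norm_num)).const_mul
    (C / √c)).mono' ?_ ?_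
  · refine ContinuousOn.aestronglyMeasurable ?_ measurableSet_Ioo
    exact (hv.mono Ioo_subset_Icc_self).div hf.sqrt fun x hx =>
      (Real.sqrt_pos.2 (hf_pos x hx)).ne'
  · filter_upwards [ae_restrict_mem measurableSet_Ioo] with x hx
    have hxa : 0 < x - a := sub_pos.2 hx.1
    rw [norm_div, Real.norm_of_nonneg (Real.sqrt_nonneg _), Real.rpow_neg hxa.le,
      ← Real.sqrt_eq_rpow, ← div_eq_mul_inv, div_div, ← Real.sqrt_mul hc.le]
    have hvx := hC x (Ioo_subset_Icc_self hx)
    gcongr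
    · exact (norm_nonneg _).trans hvx
    · exact hfc x hx

end SimpleZero

theorem stmt14_general (l a m z rp r₀ k e qe μ lam : ℝ)
    (hrp : 0 < rp) (hr₀ : rp < r₀)
    (hΔzero : (rp ^ 2 + a ^ 2) * (1 + rp ^ 2 / l ^ 2) - 2 * m * rp + z ^ 2 = 0)
    (hΔ' : 0 < deriv
      (fun r : ℝ => (r ^ 2 + a ^ 2) * (1 + r ^ 2 / l ^ 2) - 2 * m * r + z ^ 2) rp)
    (hΔpos : ∀ r ∈ Set.Ioc rp r₀,
      0 < (r ^ 2 + a ^ 2) * (1 + r ^ 2 / l ^ 2) - 2 * m * r + z ^ 2) :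
    IntegrableOn
      (fun r : ℝ =>
        (r ^ 2 + a ^ 2) /
            ((r ^ 2 + a ^ 2) * (1 + r ^ 2 / l ^ 2) - 2 * m * r + z ^ 2) *
            |(a * (1 - a ^ 2 / l ^ 2) * k + e * qe * r) / (r ^ 2 + a ^ 2) -
              (a * (1 - a ^ 2 / l ^ 2) * k + e * qe * rp) / (rp ^ 2 + a ^ 2)| +
          (μ * |r| + |lam|) /
            Real.sqrt ((r ^ 2 + a ^ 2) * (1 + r ^ 2 / l ^ 2) - 2 * m * r + z ^ 2))
      (Set.Ioo rp r₀) volume := by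
  set Δ : ℝ → ℝ := fun r => (r ^ 2 + a ^ 2) * (1 + r ^ 2 / l ^ 2) - 2 * m * r + z ^ 2
  have hΔ_cont : Continuous Δ := by fun_prop
  obtain ⟨c, hc, hcΔ⟩ :=
    exists_pos_mul_sub_le_of_deriv_pos hr₀.le hΔ_cont.continuousOn hΔzero hΔ' hΔpos
  replace hcΔ : ∀ r ∈ Ioo rp r₀, c * (r - rp) ≤ Δ r := fun r hr => hcΔ r (Ioo_subset_Icc_self hr)
  obtain ⟨K, hφ⟩ : ∃ K, LipschitzOnWith K
      (fun r : ℝ => (a * (1 - a ^ 2 / l ^ 2) * k + e * qe * r) / (r ^ 2 + a ^ 2)) (Icc rp r₀) := by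
    refine ContDiffOn.exists_lipschitzOnWith (n := 1) ?_ one_ne_zero (convex_Icc _ _) isCompact_Icc
    exact ContDiffOn.div (by fun_prop) (by fun_prop) fun r hr => by
      have : 0 < r := hrp.trans_le hr.1
      positivity
  exact (integrableOn_div_mul_abs_sub_of_lipschitzOnWith hc hΔ_cont.continuousOn hcΔ
      (w := fun r => r ^ 2 + a ^ 2) (by fun_prop) hφ).add
    (integrableOn_div_sqrt_of_mul_sub_le hc hΔ_cont.continuousOn hcΔ
      (v := fun r => μ * |r| + |lam|) (by fun_prop))

theorem stmt14 (l a m z rp r₀ k e qe μ lam : ℝ) (hl : 0 < l) (ha : 0 ≤ a) (hal : a < l)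
    (hrp : 0 < rp) (hr₀ : rp < r₀)
    (hΔzero : (rp ^ 2 + a ^ 2) * (1 + rp ^ 2 / l ^ 2) - 2 * m * rp + z ^ 2 = 0)
    (hΔ' : 0 < deriv
      (fun r : ℝ => (r ^ 2 + a ^ 2) * (1 + r ^ 2 / l ^ 2) - 2 * m * r + z ^ 2) rp)
    (hΔpos : ∀ r ∈ Set.Ioc rp r₀,
      0 < (r ^ 2 + a ^ 2) * (1 + r ^ 2 / l ^ 2) - 2 * m * r + z ^ 2) :
    IntegrableOn
      (fun r : ℝ =>
        (r ^ 2 + a ^ 2) /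
            ((r ^ 2 + a ^ 2) * (1 + r ^ 2 / l ^ 2) - 2 * m * r + z ^ 2) *
            |(a * (1 - a ^ 2 / l ^ 2) * k + e * qe * r) / (r ^ 2 + a ^ 2) -
              (a * (1 - a ^ 2 / l ^ 2) * k + e * qe * rp) / (rp ^ 2 + a ^ 2)| +
          (μ * |r| + |lam|) /
            Real.sqrt ((r ^ 2 + a ^ 2) * (1 + r ^ 2 / l ^ 2) - 2 * m * r + z ^ 2))
      (Set.Ioo rp r₀) volume :=
  stmt14_general l a m z rp r₀ k e qe μ lam hrp hr₀ hΔzero hΔ' hΔpos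
end

section
/- Let H be a nonzero complex Hilbert space and let G be a bounded selfadjoint operator on H. For t ∈ ℝ let U_t = exp(i t G), the operator exponential of i t G. Then there exist a real number T ≠ 0 and a vector ψ ≠ 0 such that U_{t+T} ψ = U_t ψ for all t ∈ ℝ if and only if G has an eigenvalue (i.e., the point spectrum of G is nonempty). -/
/-!
If `G` has an eigenvector `ψ`, its eigenvalue `r` is real and `exp(itG) ψ = exp(itr) ψ` is periodic.
Conversely, by the group law a periodic orbit is a nonzero fixed vector `ψ` of `exp(c G)` with
`c = iT ≠ 0`, i.e. a nonzero vector in the kernel of `f(G)` for `f(z) = exp(cz) - 1`. On the compact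
spectrum `f` has only finitely many zeros, all simple. Peeling them off one at a time,
`f(z) = (z - μ) g(z)` with `g = dslope f μ`, gives `f(G) = (G - μ) g(G)`: either `g(G) ψ` is an
eigenvector for `μ`, or `ψ` lies in the kernel of `g(G)`, where `g` has one zero fewer. Once no zero
is left, `f(G)` is invertible, which is impossible.
-/

open Complex

theorem finite_setOf_exp_mul_eq_one {c : ℂ} (hc : c ≠ 0) {K : Set ℂ}
    (hK : Bornology.IsBounded K) : {z ∈ K | exp (c * z) = 1}.Finite := by
  set w := 2 * Real.pi * I / c
  have hw : w ≠ 0 := div_ne_zero (by simp [Real.pi_ne_zero, I_ne_zero]) hc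
  have hpre : ((fun n : ℤ => (n : ℂ) * w) ⁻¹' K).Finite := by
    obtain ⟨R, hR⟩ := hK.subset_closedBall 0
    have hbdd : Bornology.IsBounded ((fun n : ℤ => (n : ℂ) * w) ⁻¹' K) :=
      (Metric.isBounded_closedBall (x := 0) (r := R / ‖w‖)).subset fun n hn => by
        have := hR hn
        rw [mem_closedBall_zero_iff, norm_mul, norm_intCast] at this
        rwa [mem_closedBall_zero_iff, Int.norm_eq_abs, le_div_iff₀ (norm_pos_iff.2 hw)]
    exact hbdd.isCompact_closure.finite_of_discrete.subset subset_closure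
  refine (hpre.image fun n : ℤ => (n : ℂ) * w).subset ?_
  rintro z ⟨hzK, hz⟩
  obtain ⟨n, hn⟩ := exp_eq_one_iff.mp hz
  have hzn : z = n * w := by
    rw [mul_div_assoc', eq_div_iff hc, mul_comm z]
    exact hn
  exact ⟨n, by simpa [← hzn] using hzK, hzn.symm⟩

theorem deriv_eq_sub_mul_deriv_dslope_of_dslope_eq_zero {𝕜 : Type*} [NontriviallyNormedField 𝕜]
    {f : 𝕜 → 𝕜} {μ z : 𝕜} (hμ : f μ = 0) (hg : DifferentiableAt 𝕜 (dslope f μ) z)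
    (hz : dslope f μ z = 0) : deriv f z = (z - μ) * deriv (dslope f μ) z := by
  have hd := ((hasDerivAt_id z).sub_const μ).mul hg.hasDerivAt
  rw [(hd.congr_of_eventuallyEq (.of_forall fun w => (sub_smul_dslope_of_zero hμ w).symm)).deriv,
    hz]
  simp

theorem NormedSpace.exp_apply_of_apply_eq_smul {𝕂 E : Type*} [RCLike 𝕂] [NormedAddCommGroup E]
    [NormedSpace 𝕂 E] [CompleteSpace E] {A : E →L[𝕂] E} {a : 𝕂} {ψ : E} (h : A ψ = a • ψ) :
    NormedSpace.exp A ψ = NormedSpace.exp a • ψ := by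
  have hpow (n : ℕ) : (A ^ n) ψ = a ^ n • ψ := by
    induction n with
    | zero => simp
    | succ n ih => rw [pow_succ', mul_apply_eq_comp, ih, map_smul, h, smul_smul, ← pow_succ]
  have hA := (NormedSpace.exp_series_hasSum_exp' (𝕂 := 𝕂) A).mapL (ContinuousLinearMap.apply 𝕂 E ψ)
  have ha := (NormedSpace.exp_series_hasSum_exp' (𝕂 := 𝕂) a).smul_const ψ
  refine hA.unique (ha.congr_fun fun n => ?_)
  simp [hpow, smul_smul]

theorem exp_smul_apply_add_eq_iff {E : Type*} [NormedAddCommGroup E] [NormedSpace ℂ E]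
    [CompleteSpace E] (A : E →L[ℂ] E) (ψ : E) (T : ℝ) :
    (∀ t : ℝ, NormedSpace.exp ((I * ((t + T : ℝ) : ℂ)) • A) ψ =
        NormedSpace.exp ((I * ((t : ℝ) : ℂ)) • A) ψ) ↔
      NormedSpace.exp ((I * T) • A) ψ = ψ := by
  let _ : NormedAlgebra ℚ (E →L[ℂ] E) := .restrictScalars ℚ ℂ _
  have hsplit (t : ℝ) : NormedSpace.exp ((I * ((t + T : ℝ) : ℂ)) • A) =
      NormedSpace.exp ((I * t) • A) * NormedSpace.exp ((I * T) • A) := by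
    rw [← NormedSpace.exp_add_of_commute ((Commute.refl A).smul_left _ |>.smul_right _), ← add_smul]
    push_cast
    ring_nf
  refine ⟨fun h => by simpa [hsplit] using h 0, fun h t => ?_⟩
  rw [hsplit, mul_apply_eq_comp, h]

theorem exists_ne_zero_exp_mul_I_eq_one (r : ℝ) : ∃ T : ℝ, T ≠ 0 ∧ exp (I * T * r) = 1 := by
  rcases eq_or_ne r 0 with rfl | hr
  · exact ⟨1, one_ne_zero, by simp⟩
  · refine ⟨2 * Real.pi / r, div_ne_zero (by positivity) hr, ?_⟩
    have hr' : (r : ℂ) ≠ 0 := ofReal_ne_zero.2 hr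
    rw [← exp_two_pi_mul_I]
    push_cast
    field_simp

section Operator

variable {H : Type*} [NormedAddCommGroup H] [InnerProductSpace ℂ H] [CompleteSpace H]

theorem exists_eigenvector_of_cfc_apply_eq_zero (a : H →L[ℂ] H) [IsStarNormal a]
    (Z : Finset ℂ) (f : ℂ → ℂ) (hf : Differentiable ℂ f)
    (hZ : ∀ z ∈ spectrum ℂ a, f z = 0 → z ∈ Z ∧ deriv f z ≠ 0) {ψ : H} (hψ : ψ ≠ 0)
    (hfψ : cfc f a ψ = 0) : ∃ μ : ℂ, ∃ φ : H, φ ≠ 0 ∧ a φ = μ • φ := by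
  induction Z using Finset.induction_on generalizing f ψ with
  | empty =>
    have hunit : IsUnit (cfc f a) :=
      (isUnit_cfc_iff f a hf.continuous.continuousOn).2 fun z hz h0 => by simpa using hZ z hz h0
    exact absurd (ContinuousLinearMap.isUnit_iff_bijective.1 hunit).1 fun h =>
      hψ (h (hfψ.trans (map_zero _).symm))
  | @insert μ Z hμZ ih =>
    by_cases hμ : μ ∈ spectrum ℂ a ∧ f μ = 0
    swap
    · refine ih f hf (fun z hz h0 => ?_) hψ hfψ
      obtain ⟨hmem, hderiv⟩ := hZ z hz h0
      refine ⟨(Finset.mem_insert.1 hmem).resolve_left ?_, hderiv⟩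
      rintro rfl
      exact hμ ⟨hz, h0⟩
    set g := dslope f μ
    have hg : Differentiable ℂ g := differentiableOn_univ.1 <|
      (Complex.differentiableOn_dslope Filter.univ_mem).2 hf.differentiableOn
    have hgμ : g μ ≠ 0 := by
      rw [show g μ = deriv f μ from dslope_same f μ]
      exact (hZ μ hμ.1 hμ.2).2
    have hfg : cfc f a = (a - algebraMap ℂ _ μ) * cfc g a := by
      have : f = fun z => (z - μ) * g z := funext fun z => (sub_smul_dslope_of_zero hμ.2 z).symm
      rw [this, cfc_mul _ _ a (by fun_prop) hg.continuous.continuousOn, cfc_sub _ _ a, cfc_id' ℂ a,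
        cfc_const μ a]
    by_cases hgψ : cfc g a ψ = 0
    · refine ih g hg (fun z hz h0 => ?_) hψ hgψ
      have hzμ : z ≠ μ := by rintro rfl; exact hgμ h0
      have hf0 : f z = 0 := by rw [← sub_smul_dslope_of_zero hμ.2 z]; simp [g, h0]
      obtain ⟨hmem, hderiv⟩ := hZ z hz hf0
      refine ⟨(Finset.mem_insert.1 hmem).resolve_left hzμ, fun hg' => hderiv ?_⟩
      rw [deriv_eq_sub_mul_deriv_dslope_of_dslope_eq_zero hμ.2 (hg z) h0]
      simp [g, hg']
    · refine ⟨μ, cfc g a ψ, hgψ, ?_⟩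
      rw [hfg, Algebra.algebraMap_eq_smul_one] at hfψ
      simpa [sub_eq_zero] using hfψ

theorem exists_eigenvector_of_exp_smul_apply_eq_self (a : H →L[ℂ] H) [IsStarNormal a] {c : ℂ}
    (hc : c ≠ 0) {ψ : H} (hψ : ψ ≠ 0) (h : NormedSpace.exp (c • a) ψ = ψ) :
    ∃ μ : ℂ, ∃ φ : H, φ ≠ 0 ∧ a φ = μ • φ := by
  have hfin := finite_setOf_exp_mul_eq_one hc (spectrum.isCompact (𝕜 := ℂ) a).isBounded
  refine exists_eigenvector_of_cfc_apply_eq_zero a hfin.toFinset (fun z => exp (c * z) - 1)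
    (by fun_prop) (fun z hz h0 => ⟨hfin.mem_toFinset.2 ⟨hz, sub_eq_zero.1 h0⟩, ?_⟩) hψ ?_
  · rw [(((hasDerivAt_id' z).const_mul c).cexp.sub_const 1).deriv]
    simp [hc, exp_ne_zero]
  · rw [cfc_sub _ _ a, cfc_comp_const_mul c exp a, CFC.complex_exp_eq_normedSpace_exp,
      cfc_const_one ℂ a]
    simp [h]

theorem exists_exp_smul_apply_eq_self_of_isSelfAdjoint {G : H →L[ℂ] H} (hG : IsSelfAdjoint G)
    {c : ℂ} {ψ : H} (hψ : ψ ≠ 0) (h : G ψ = c • ψ) :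
    ∃ T : ℝ, T ≠ 0 ∧ NormedSpace.exp ((I * T) • G) ψ = ψ := by
  have hc : (starRingEnd ℂ) c = c := hG.isSymmetric.conj_eigenvalue_eq_self
    (Module.End.hasEigenvalue_of_hasEigenvector ⟨Module.End.mem_eigenspace_iff.2 h, hψ⟩)
  obtain ⟨T, hT, hexp⟩ := exists_ne_zero_exp_mul_I_eq_one c.re
  refine ⟨T, hT, ?_⟩
  rw [NormedSpace.exp_apply_of_apply_eq_smul (a := I * T * c), ← exp_eq_exp_ℂ,
    ← (conj_eq_iff_re.1 hc : (c.re : ℂ) = c), hexp, one_smul]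
  rw [smul_apply, h, smul_smul]

end Operator

theorem stmt17_general {H : Type*} [NormedAddCommGroup H] [InnerProductSpace ℂ H]
    [CompleteSpace H] (G : H →L[ℂ] H) (hG : IsSelfAdjoint G) :
    (∃ T : ℝ, T ≠ 0 ∧ ∃ ψ : H, ψ ≠ 0 ∧ ∀ t : ℝ,
        NormedSpace.exp ((I * ((t + T : ℝ) : ℂ)) • G) ψ =
          NormedSpace.exp ((I * ((t : ℝ) : ℂ)) • G) ψ) ↔
      ∃ c : ℂ, ∃ ψ : H, ψ ≠ 0 ∧ G ψ = c • ψ := by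
  have : IsStarNormal G := hG.isStarNormal
  simp_rw [exp_smul_apply_add_eq_iff]
  constructor
  · rintro ⟨T, hT, ψ, hψ, hfix⟩
    exact exists_eigenvector_of_exp_smul_apply_eq_self G
      (mul_ne_zero I_ne_zero (ofReal_ne_zero.2 hT)) hψ hfix
  · rintro ⟨c, ψ, hψ, hGψ⟩
    obtain ⟨T, hT, hfix⟩ := exists_exp_smul_apply_eq_self_of_isSelfAdjoint hG hψ hGψ
    exact ⟨T, hT, ψ, hψ, hfix⟩

theorem stmt17 {H : Type*} [NormedAddCommGroup H] [InnerProductSpace ℂ H]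
    [CompleteSpace H] [Nontrivial H] (G : H →L[ℂ] H) (hG : IsSelfAdjoint G) :
    (∃ T : ℝ, T ≠ 0 ∧ ∃ ψ : H, ψ ≠ 0 ∧ ∀ t : ℝ,
        NormedSpace.exp ((I * ((t + T : ℝ) : ℂ)) • G) ψ =
          NormedSpace.exp ((I * ((t : ℝ) : ℂ)) • G) ψ) ↔
      ∃ c : ℂ, ∃ ψ : H, ψ ≠ 0 ∧ G ψ = c • ψ :=
  stmt17_general G hG
end
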